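/- The element a_{124}a_{123}a_{124}a_{123} is a nontrivial element of the group G_4^3. -/

import Mathlib

/-!
Send `a_m` to the reflection `sr (2 t)` of the dihedral group of order 16, where `t` is the
index missing from `m`. Reflections are involutions, any two triples in `{1,2,3,4}` share at
least two indices so no far-commutativity relation occurs, and the tetrahedron relation is a finite
check; hence this defines a homomorphism `G₄³ → D₈`. It sends `a_{124} a_{123} a_{124} a_{123}`
to `(sr 4 * sr 6) ^ 2 = r 4 ≠ 1`.
-/

/-- Index set: 3-element subsets of `{1,...,n}` (modeled as `Fin n`). -/
abbrev Gn3Idx (n : ℕ) := {m : Finset (Fin n) // m.card = 3}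

/-- Defining relations of the group `Gₙ³`: squares of generators, far-commutativity
for triples sharing at most one index, and the tetrahedron (octagon) relation. -/
def Gn3Rels (n : ℕ) : Set (FreeGroup (Gn3Idx n)) :=
  {r | (∃ m : Gn3Idx n, r = (FreeGroup.of m) ^ 2) ∨
    (∃ m m' : Gn3Idx n, (m.1 ∩ m'.1).card ≤ 1 ∧
      r = FreeGroup.of m * FreeGroup.of m' * (FreeGroup.of m)⁻¹ * (FreeGroup.of m')⁻¹) ∨
    (∃ (i j k l : Fin n) (h1 : ({i, j, k} : Finset (Fin n)).card = 3)
        (h2 : ({i, j, l} : Finset (Fin n)).card = 3)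
        (h3 : ({i, k, l} : Finset (Fin n)).card = 3)
        (h4 : ({j, k, l} : Finset (Fin n)).card = 3),
      List.Pairwise (· ≠ ·) [i, j, k, l] ∧
      r = FreeGroup.of ⟨{i, j, k}, h1⟩ * FreeGroup.of ⟨{i, j, l}, h2⟩ *
          FreeGroup.of ⟨{i, k, l}, h3⟩ * FreeGroup.of ⟨{j, k, l}, h4⟩ *
          (FreeGroup.of ⟨{j, k, l}, h4⟩ * FreeGroup.of ⟨{i, k, l}, h3⟩ *
           FreeGroup.of ⟨{i, j, l}, h2⟩ * FreeGroup.of ⟨{i, j, k}, h1⟩)⁻¹)}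

/-- The group `Gₙ³`. -/
abbrev Gn3 (n : ℕ) := PresentedGroup (Gn3Rels n)

/-- The generator `a_m` of `Gₙ³`. -/
def Gn3.gen {n : ℕ} (m : Gn3Idx n) : Gn3 n := PresentedGroup.of m

open DihedralGroup

namespace Gn3

def reflectionD8 (s : Finset (Fin 4)) : DihedralGroup 8 :=
  if (0 : Fin 4) ∉ s then sr 0
  else if (1 : Fin 4) ∉ s then sr 2
  else if (2 : Fin 4) ∉ s then sr 4
  else sr 6

lemma reflectionD8_mul_self (s : Finset (Fin 4)) : reflectionD8 s * reflectionD8 s = 1 := by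
  unfold reflectionD8
  split_ifs <;> exact sr_mul_self _

lemma two_le_card_inter (m m' : Gn3Idx 4) : 2 ≤ (m.1 ∩ m'.1).card := by
  have h_union := Finset.card_union_add_card_inter m.1 m'.1
  have h_le := Finset.card_le_univ (m.1 ∪ m'.1)
  rw [m.2, m'.2] at h_union
  rw [Fintype.card_fin] at h_le
  omega

lemma reflectionD8_tetrahedron (i j k l : Fin 4) (h : List.Pairwise (· ≠ ·) [i, j, k, l]) :
    reflectionD8 {i, j, k} * reflectionD8 {i, j, l} * reflectionD8 {i, k, l} *
        reflectionD8 {j, k, l} =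
      reflectionD8 {j, k, l} * reflectionD8 {i, k, l} * reflectionD8 {i, j, l} *
        reflectionD8 {i, j, k} := by
  revert i j k l
  decide

lemma reflectionD8_rels :
    ∀ r ∈ Gn3Rels 4, FreeGroup.lift (fun m : Gn3Idx 4 => reflectionD8 m.1) r = 1 := by
  rintro r (⟨m, rfl⟩ | ⟨m, m', h_inter, rfl⟩ | ⟨i, j, k, l, h1, h2, h3, h4, h_ne, rfl⟩)
  · rw [map_pow, FreeGroup.lift_apply_of, pow_two, reflectionD8_mul_self]
  · exact absurd (two_le_card_inter m m') (by omega)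
  · simp only [map_mul, map_inv, FreeGroup.lift_apply_of]
    rw [reflectionD8_tetrahedron i j k l h_ne, mul_inv_eq_one]

def toD8 : Gn3 4 →* DihedralGroup 8 := PresentedGroup.toGroup reflectionD8_rels

@[simp]
lemma toD8_gen (m : Gn3Idx 4) : toD8 (gen m) = reflectionD8 m.1 :=
  PresentedGroup.toGroup.of reflectionD8_rels

end Gn3

/-- The element `a_{124} a_{123} a_{124} a_{123}` is a nontrivial element of `G₄³`.
(Indices `1,2,3,4` are modeled as `0,1,2,3 : Fin 4`.) -/
theorem nontrivial_element_G43 :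
    Gn3.gen (⟨{0, 1, 3}, by decide⟩ : Gn3Idx 4) * Gn3.gen ⟨{0, 1, 2}, by decide⟩ *
    Gn3.gen ⟨{0, 1, 3}, by decide⟩ * Gn3.gen ⟨{0, 1, 2}, by decide⟩ ≠ 1 := by
  intro h
  have h_image := congrArg Gn3.toD8 h
  simp only [map_mul, map_one, Gn3.toD8_gen] at h_image
  revert h_image
  decide
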